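/- Assume A is a local ring with finitely generated maximal ideal M such that f(M)B = B (i.e., the ideal of B generated by f(M) is all of B), and that J is contained in the Jacobson radical Jac(B) of B. Then A⋈^f J is a local ring with finitely generated maximal ideal, and embdim(A) = embdim(A⋈^f J). -/

import Mathlib

section Amalgamation

variable {A B : Type*} [CommRing A] [CommRing B]

/-- The amalgamation `A ⋈^f J` of `A` with `B` along the ideal `J` of `B` with respect to
the ring homomorphism `f : A → B`, realized as the subring
`{(a, f a + j) | a ∈ A, j ∈ J}` of `A × B`. -/
def amalg (f : A →+* B) (J : Ideal B) : Subring (A × B) where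
  carrier := {x : A × B | x.2 - f x.1 ∈ J}
  zero_mem' := by simp
  one_mem' := by simp
  add_mem' := by
    intro x y hx hy
    simp only [Set.mem_setOf_eq, Prod.fst_add, Prod.snd_add, map_add] at *
    have h : x.2 + y.2 - (f x.1 + f y.1) = x.2 - f x.1 + (y.2 - f y.1) := by ring
    rw [h]; exact J.add_mem hx hy
  neg_mem' := by
    intro x hx
    simp only [Set.mem_setOf_eq, Prod.fst_neg, Prod.snd_neg, map_neg] at *
    have h : -x.2 - -f x.1 = -(x.2 - f x.1) := by ring
    rw [h]; exact J.neg_mem hx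
  mul_mem' := by
    intro x y hx hy
    simp only [Set.mem_setOf_eq, Prod.fst_mul, Prod.snd_mul, map_mul] at *
    have h : x.2 * y.2 - f x.1 * f y.1 = x.2 * (y.2 - f y.1) + (x.2 - f x.1) * f y.1 := by ring
    rw [h]
    exact J.add_mem (J.mul_mem_left _ hy) (J.mul_mem_right _ hx)

lemma mem_amalg_iff (f : A →+* B) (J : Ideal B) (x : A × B) :
    x ∈ amalg f J ↔ x.2 - f x.1 ∈ J := Iff.rfl

/-- The natural projection `p_A : A ⋈^f J → A`. -/
def pA (f : A →+* B) (J : Ideal B) : amalg f J →+* A :=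
  (RingHom.fst A B).comp (amalg f J).subtype

/-- The natural projection `p_B : A ⋈^f J → B`. -/
def pB (f : A →+* B) (J : Ideal B) : amalg f J →+* B :=
  (RingHom.snd A B).comp (amalg f J).subtype

/-- For an ideal `P` of `A`, the ideal `P'^f = P ⋈^f J = {(p, f p + j) | p ∈ P, j ∈ J}`
of `A ⋈^f J`. -/
def idealPf (f : A →+* B) (J : Ideal B) (P : Ideal A) : Ideal (amalg f J) :=
  Submodule.copy (Ideal.comap (pA f J) P)
    {x : amalg f J | ∃ p ∈ P, ∃ j ∈ J, (x : A × B) = (p, f p + j)}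
    (by
      ext x
      simp only [Set.mem_setOf_eq, SetLike.mem_coe, Ideal.mem_comap]
      constructor
      · rintro ⟨p, hp, j, hj, hx⟩
        have h1 : pA f J x = p := by
          show (x : A × B).1 = p
          rw [hx]
        rw [h1]; exact hp
      · intro hx
        refine ⟨(x : A × B).1, hx, (x : A × B).2 - f (x : A × B).1,
          (mem_amalg_iff f J _).mp x.2, ?_⟩
        ext <;> simp)

/-- `nu I` is the minimal number of generators of the ideal `I`. -/
noncomputable def nu {R : Type*} [CommRing R] (I : Ideal R) : ℕ :=
  sInf {n : ℕ | ∃ s : Finset R, s.card = n ∧ Ideal.span (s : Set R) = I}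

end Amalgamation

/-! The projection `pA : A ⋈^f J → A` is surjective, with section `iA : a ↦ (a, f a)`, and it
reflects units: if `a` is a unit and `j ∈ Jac(B)` then `f a + j` is a unit of `B`, and the pair of
inverses lies in `A ⋈^f J`. Hence `A ⋈^f J` is local with maximal ideal `pA⁻¹(M) = M ⋈^f J`.
The kernel of `pA` is `0 × J`, and `f(M)B = B` puts it inside the ideal generated by `iA(M)`, so
`M ⋈^f J = iA(M) · (A ⋈^f J)`. Thus `iA` carries generators of `M` to generators of `M ⋈^f J`
and `pA` carries them back, and both maps can only lower the minimal number of generators. -/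

lemma isUnit_add_of_mem_jacobson_bot {R : Type*} [CommRing R] {u j : R} (hu : IsUnit u)
    (hj : j ∈ (⊥ : Ideal R).jacobson) : IsUnit (u + j) := by
  obtain ⟨v, rfl⟩ := hu
  have h : (v : R) + j = v * (j * ↑v⁻¹ + 1) := by
    rw [mul_add, mul_one, mul_comm j, ← mul_assoc, Units.mul_inv, one_mul, add_comm]
  rw [h]
  exact v.isUnit.mul (Ideal.mem_jacobson_bot.mp hj _)

section MinimalGenerators

variable {R S : Type*} [CommRing R] [CommRing S]

lemma nu_le_card {I : Ideal R} {s : Finset R} (h : Ideal.span (s : Set R) = I) : nu I ≤ s.card :=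
  Nat.sInf_le ⟨s, rfl, h⟩

lemma exists_card_eq_nu {I : Ideal R} (h : I.FG) :
    ∃ s : Finset R, s.card = nu I ∧ Ideal.span (s : Set R) = I := by
  obtain ⟨t, ht⟩ := h
  exact Nat.sInf_mem (s := {n | ∃ s : Finset R, s.card = n ∧ Ideal.span (s : Set R) = I})
    ⟨t.card, t, rfl, ht⟩

lemma nu_map_le (φ : R →+* S) {I : Ideal R} (hI : I.FG) : nu (I.map φ) ≤ nu I := by
  classical
  obtain ⟨s, hs, rfl⟩ := exists_card_eq_nu hI
  calc nu ((Ideal.span (s : Set R)).map φ) ≤ (s.image φ).card :=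
        nu_le_card (by rw [Finset.coe_image, Ideal.map_span])
    _ ≤ nu (Ideal.span (s : Set R)) := hs ▸ Finset.card_image_le

end MinimalGenerators

section

variable {A B : Type*} [CommRing A] [CommRing B] (f : A →+* B) (J : Ideal B)

def iA : A →+* amalg f J :=
  ((RingHom.id A).prod f).codRestrict (amalg f J) fun a => by simp [mem_amalg_iff]

@[simp]
lemma coe_iA (a : A) : (iA f J a : A × B) = (a, f a) := rfl

lemma pA_comp_iA : (pA f J).comp (iA f J) = RingHom.id A := rfl

lemma pA_surjective : Function.Surjective (pA f J) :=
  fun a => ⟨iA f J a, rfl⟩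

lemma idealPf_eq_comap (P : Ideal A) : idealPf f J P = P.comap (pA f J) :=
  Submodule.copy_eq _ _ _

variable {f J}

lemma isLocalHom_pA (hJ : J ≤ (⊥ : Ideal B).jacobson) : IsLocalHom (pA f J) := by
  refine ⟨fun ⟨⟨a, b⟩, hab⟩ ha => ?_⟩
  replace ha : IsUnit a := ha
  replace hab : b - f a ∈ J := hab
  obtain ⟨u, rfl⟩ := ha
  obtain ⟨v, rfl⟩ : IsUnit b := by
    simpa using isUnit_add_of_mem_jacobson_bot (u.isUnit.map f) (hJ hab)
  have hinv : (↑v⁻¹ : B) - f ↑u⁻¹ ∈ J := by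
    have hu : f ↑u⁻¹ * f u = 1 := by rw [← map_mul, u.inv_mul, map_one]
    have h : (↑v⁻¹ : B) - f ↑u⁻¹ = -(↑v⁻¹ * f ↑u⁻¹) * (v - f u) := by
      linear_combination f ↑u⁻¹ * v.mul_inv - ↑v⁻¹ * hu
    rw [h]
    exact J.mul_mem_left _ hab
  exact .of_mul_eq_one ⟨(↑u⁻¹, ↑v⁻¹), hinv⟩ (Subtype.ext (Prod.ext u.mul_inv v.mul_inv))

/-- Writing `1 = ∑ cᵢ f(mᵢ)` with `mᵢ ∈ I`, every `(0, j)` equals `∑ (0, j cᵢ) · (mᵢ, f mᵢ)`. -/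
lemma ker_pA_le_map_iA {I : Ideal A} (hI : I.map f = ⊤) :
    RingHom.ker (pA f J) ≤ I.map (iA f J) := by
  intro x hx
  replace hx : (x : A × B).1 = 0 := hx
  have hxJ : (x : A × B).2 ∈ J := by simpa [hx] using (mem_amalg_iff f J _).mp x.2
  have h1 : (1 : B) ∈ I.map f := hI ▸ Submodule.mem_top
  obtain ⟨n, c, m, hsum⟩ := Submodule.mem_span_set'.mp h1
  simp only [smul_eq_mul] at hsum
  choose a ha hfa using fun i => (m i).2
  let y (i : Fin n) : amalg f J :=
    ⟨(0, (x : A × B).2 * c i), by simpa [mem_amalg_iff] using J.mul_mem_right _ hxJ⟩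
  have hx_eq : x = ∑ i, y i * iA f J (a i) := by
    ext
    · simp [y, hx, Prod.fst_sum]
    · simp [y, hfa, Prod.snd_sum, mul_assoc, ← Finset.mul_sum, hsum]
  rw [hx_eq]
  exact Ideal.sum_mem _ fun i _ => Ideal.mul_mem_left _ _ (Ideal.mem_map_of_mem _ (ha i))

lemma map_iA_eq_idealPf {I : Ideal A} (hI : I.map f = ⊤) : I.map (iA f J) = idealPf f J I := by
  have hI' : I = (I.map (iA f J)).map (pA f J) := by
    rw [Ideal.map_map, pA_comp_iA, Ideal.map_id]
  rw [idealPf_eq_comap, hI', Ideal.comap_map_of_surjective _ (pA_surjective f J), ← hI']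
  exact (sup_eq_left.mpr (ker_pA_le_map_iA hI)).symm

end

/-- If `A` is local with finitely generated maximal ideal `M`, `f(M)B = B`, and
`J ⊆ Jac(B)`, then `A ⋈^f J` is local with finitely generated maximal ideal
`M ⋈^f J` and `embdim A = embdim (A ⋈^f J)`. -/
theorem stmt17 {A B : Type*} [CommRing A] [CommRing B] (f : A →+* B) (J : Ideal B)
    (M : Ideal A) (hM : M.IsMaximal) (hu : ∀ N : Ideal A, N.IsMaximal → N = M)
    (hMfg : M.FG) (hMB : Ideal.map f M = ⊤) (hJac : J ≤ (⊥ : Ideal B).jacobson) :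
    IsLocalRing (amalg f J) ∧ (idealPf f J M).IsMaximal ∧ (idealPf f J M).FG ∧
      nu M = nu (idealPf f J M) := by
  have : IsLocalRing A := .of_unique_max_ideal ⟨M, hM, hu⟩
  have := isLocalHom_pA (f := f) hJac
  have hP : idealPf f J M = M.map (iA f J) := (map_iA_eq_idealPf hMB).symm
  have hPfg : (idealPf f J M).FG := hP ▸ hMfg.map _
  have hPmax : (idealPf f J M).IsMaximal := by
    rw [idealPf_eq_comap]
    exact Ideal.comap_isMaximal_of_surjective _ (pA_surjective f J)
  have hM_eq : (idealPf f J M).map (pA f J) = M := by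
    rw [idealPf_eq_comap, Ideal.map_comap_of_surjective _ (pA_surjective f J)]
  refine ⟨(pA f J).domain_isLocalRing, hPmax, hPfg, le_antisymm ?_ ?_⟩
  · calc nu M = nu ((idealPf f J M).map (pA f J)) := by rw [hM_eq]
      _ ≤ nu (idealPf f J M) := nu_map_le _ hPfg
  · exact hP ▸ nu_map_le _ hMfg
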